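/- arXiv:2012.09317 — 3 statements merged into one kernel-verified Lean document; each statement's English description precedes it below -/
import Mathlib

section
/- Fix α∈(0,1), rates λ>0, μ>0, ξ≥0, an initial state i∈ℕ and z∈(0,1). Suppose the family P^α_n:[0,∞)→ℝ (n=0,1,2,…) solves the fractional Kolmogorov forward equations of order α of the M/M/1 queue with catastrophes, that for each t≥0 the series G(t) = ∑_{n=0}^∞ z^n P^α_n(t) converges absolutely, and that the Caputo derivative of G can be computed termwise, i.e. D^α G(t) = ∑_{n=0}^∞ z^n D^α P^α_n(t) for every t>0. Then G(0) = z^i and, for every t>0, z·D^α G(t) = (1−z)·[(μ − zλ − ξz/(1−z))·G(t) − μ·P^α_0(t) + ξz/(1−z)]. -/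
open MeasureTheory Real

/-- Caputo fractional derivative of order `α` of `f` at `t`. -/
noncomputable def caputoD (α : ℝ) (f : ℝ → ℝ) (t : ℝ) : ℝ :=
  (1 / Real.Gamma (1 - α)) * ∫ u in (0:ℝ)..t, (t - u) ^ (-α) * deriv f u

/-!
The fractional order plays no role once the Caputo derivative of `G` may be taken termwise: the
claim is the generating-function identity of the forward equations. Multiplying the `n`-th
equation by `z ^ n` and summing, the index shifts give `∑ z ^ n P (n - 1) = z G` and
`∑ z ^ n P (n + 1) = (G - P 0 - z P 1) / z`, and the catastrophe terms `ξ P n` and `ξ` sum to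
`ξ G` and `ξ`; rearranging yields the stated formula.
-/

section ForwardEquations

variable {lam mu xi z : ℝ} {p d : ℕ → ℝ}

theorem hasSum_pow_mul_of_forward_eqns (hz : z ≠ 0)
    (hd : ∀ n, d (n + 1) = -(lam + mu + xi) * p (n + 1) + lam * p n + mu * p (n + 2))
    {g : ℝ} (hg : HasSum (fun n => z ^ n * p n) g) :
    HasSum (fun n => z ^ n * d n)
      (d 0 + (-(lam + mu + xi) * (g - p 0) + lam * z * g + mu * (g - p 0 - z * p 1) / z)) := by
  have hshift1 : HasSum (fun n => z ^ (n + 1) * p (n + 1)) (g - p 0) := by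
    simpa using (hasSum_nat_add_iff' 1).2 hg
  have hshift2 : HasSum (fun n => z ^ (n + 2) * p (n + 2)) (g - p 0 - z * p 1) := by
    simpa [Finset.sum_range_succ, sub_sub] using (hasSum_nat_add_iff' 2).2 hg
  have htail : HasSum (fun n => z ^ (n + 1) * d (n + 1))
      (-(lam + mu + xi) * (g - p 0) + lam * z * g + mu * (g - p 0 - z * p 1) / z) := by
    refine (((hshift1.mul_left (-(lam + mu + xi))).add (hg.mul_left (lam * z))).add
      ((hshift2.mul_left mu).div_const z)).congr_fun fun n => ?_
    rw [hd, pow_succ z (n + 1)]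
    field_simp
    ring
  simpa only [pow_zero, one_mul] using HasSum.zero_add (f := fun n => z ^ n * d n) htail

theorem mul_tsum_pow_mul_of_forward_eqns (hz0 : z ≠ 0) (hz1 : z ≠ 1)
    (hd0 : d 0 = -(lam + xi) * p 0 + mu * p 1 + xi)
    (hd : ∀ n, d (n + 1) = -(lam + mu + xi) * p (n + 1) + lam * p n + mu * p (n + 2))
    (hp : Summable fun n => z ^ n * p n) :
    z * ∑' n, z ^ n * d n
      = (1 - z) * ((mu - z * lam - xi * z / (1 - z)) * ∑' n, z ^ n * p n - mu * p 0
          + xi * z / (1 - z)) := by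
  have h1z : 1 - z ≠ 0 := sub_ne_zero.2 hz1.symm
  rw [(hasSum_pow_mul_of_forward_eqns hz0 hd hp.hasSum).tsum_eq, hd0]
  field_simp
  ring

end ForwardEquations

theorem stmt0_general (α lam mu xi : ℝ) (i : ℕ) (z : ℝ) (hz : z ∈ Set.Ioo (0:ℝ) 1)
    (P : ℕ → ℝ → ℝ)
    (heq0 : ∀ t > (0:ℝ), caputoD α (P 0) t = -(lam + xi) * P 0 t + mu * P 1 t + xi)
    (heqn : ∀ n : ℕ, 1 ≤ n → ∀ t > (0:ℝ),
      caputoD α (P n) t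
        = -(lam + mu + xi) * P n t + lam * P (n - 1) t + mu * P (n + 1) t)
    (hinit : ∀ n : ℕ, P n 0 = if i = n then 1 else 0)
    (G : ℝ → ℝ) (hG : ∀ t : ℝ, G t = ∑' n : ℕ, z ^ n * P n t)
    (habs : ∀ t ≥ (0:ℝ), Summable fun n : ℕ => |z ^ n * P n t|)
    (hterm : ∀ t > (0:ℝ), caputoD α G t = ∑' n : ℕ, z ^ n * caputoD α (P n) t) :
    G 0 = z ^ i ∧ ∀ t > (0:ℝ),
      z * caputoD α G t
        = (1 - z) * ((mu - z * lam - xi * z / (1 - z)) * G t - mu * P 0 t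
            + xi * z / (1 - z)) := by
  refine ⟨by simp [hG, hinit], fun t ht => ?_⟩
  rw [hterm t ht, hG t]
  exact mul_tsum_pow_mul_of_forward_eqns hz.1.ne' hz.2.ne (heq0 t ht)
    (fun n => heqn (n + 1) n.succ_pos t ht) (habs t ht.le).of_abs

theorem stmt0 (α lam mu xi : ℝ) (hα : α ∈ Set.Ioo (0:ℝ) 1) (hlam : 0 < lam)
    (hmu : 0 < mu) (hxi : 0 ≤ xi) (i : ℕ) (z : ℝ) (hz : z ∈ Set.Ioo (0:ℝ) 1)
    (P : ℕ → ℝ → ℝ)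
    (heq0 : ∀ t > (0:ℝ), caputoD α (P 0) t = -(lam + xi) * P 0 t + mu * P 1 t + xi)
    (heqn : ∀ n : ℕ, 1 ≤ n → ∀ t > (0:ℝ),
      caputoD α (P n) t
        = -(lam + mu + xi) * P n t + lam * P (n - 1) t + mu * P (n + 1) t)
    (hinit : ∀ n : ℕ, P n 0 = if i = n then 1 else 0)
    (G : ℝ → ℝ) (hG : ∀ t : ℝ, G t = ∑' n : ℕ, z ^ n * P n t)
    (habs : ∀ t ≥ (0:ℝ), Summable fun n : ℕ => |z ^ n * P n t|)
    (hterm : ∀ t > (0:ℝ), caputoD α G t = ∑' n : ℕ, z ^ n * caputoD α (P n) t) :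
    G 0 = z ^ i ∧ ∀ t > (0:ℝ),
      z * caputoD α G t
        = (1 - z) * ((mu - z * lam - xi * z / (1 - z)) * G t - mu * P 0 t
            + xi * z / (1 - z)) :=
  stmt0_general α lam mu xi i z hz P heq0 heqn hinit G hG habs hterm
end

section
/- Fix λ>0, μ>0, ξ≥0, α∈(0,1), s>0, i∈ℕ and q∈ℝ. Let a₁, a₂ ∈ ℂ satisfy a₁ + a₂ = (s^α+λ+μ+ξ)/λ and a₁·a₂ = μ/λ (in particular a₁ ≠ 1 and a₂ ≠ 1, since −λ(1−a₁)(1−a₂) = s^α + ξ > 0). Define h(z) = (z^{i+1} s^{α−1} + ξ z s^{−1} − (1−z)·μq) / (−λ(z−a₁)(z−a₂)) for z near 1. Then h is differentiable at z = 1 and h′(1) = (i·s^{α−1} + μq + s^{−1}(λ−μ)) / (ξ + s^α). -/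
/-!
Write the transform as `N z / D z` with `D z = -λ (z - a₁) (z - a₂)`. By Vieta,
`D 1 = s^α + ξ` and `D' 1 = s^α + ξ + μ - λ`, while `N 1 = s^{α-1} + ξ/s = D 1 / s`
because `s^α = s^{α-1} s`. The quotient rule at a point where `N = k D` collapses to
`(N' - k D') / D`, which is the claimed value.
-/

open Real

section QuotientRule

variable {𝕜 : Type*} [NontriviallyNormedField 𝕜] {N D : 𝕜 → 𝕜} {N' D' k x : 𝕜}

theorem HasDerivAt.div_of_eq_mul (hN : HasDerivAt N N' x) (hD : HasDerivAt D D' x)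
    (hDx : D x ≠ 0) (hk : N x = k * D x) :
    HasDerivAt (fun z => N z / D z) ((N' - k * D') / D x) x :=
  (hN.div hD hDx).congr_deriv <| by rw [hk]; field_simp

end QuotientRule

section Quadratic

variable {𝕜 : Type*} [NontriviallyNormedField 𝕜]

theorem hasDerivAt_neg_mul_sub_mul_sub (c a₁ a₂ x : 𝕜) :
    HasDerivAt (fun z => -c * (z - a₁) * (z - a₂)) (-c * ((x - a₁) + (x - a₂))) x :=
  ((((hasDerivAt_id x).sub_const a₁).const_mul (-c)).mul
    ((hasDerivAt_id x).sub_const a₂)).congr_deriv <| by simp only [id_eq]; ring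

variable {c a₁ a₂ S P : 𝕜}

theorem neg_mul_one_sub_mul_one_sub_of_vieta (hc : c ≠ 0) (hsum : a₁ + a₂ = S / c)
    (hprod : a₁ * a₂ = P / c) : -c * (1 - a₁) * (1 - a₂) = S - c - P := by
  rw [eq_div_iff hc] at hsum hprod
  linear_combination hsum - hprod

theorem hasDerivAt_neg_mul_sub_mul_sub_one_of_vieta (hc : c ≠ 0) (hsum : a₁ + a₂ = S / c) :
    HasDerivAt (fun z => -c * (z - a₁) * (z - a₂)) (S - 2 * c) 1 := by
  rw [eq_div_iff hc] at hsum
  exact (hasDerivAt_neg_mul_sub_mul_sub c a₁ a₂ 1).congr_deriv (by linear_combination hsum)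

end Quadratic

theorem hasDerivAt_pow_succ_mul_add_mul_mul_sub_one_sub_mul_mul {𝕜 : Type*}
    [NontriviallyNormedField 𝕜] (n : ℕ) (A b c m r x : 𝕜) :
    HasDerivAt (fun z => z ^ (n + 1) * A + b * z * c - (1 - z) * m * r)
      ((n + 1) * x ^ n * A + b * c + m * r) x :=
  ((((hasDerivAt_pow (n + 1) x).mul_const A).add
    (((hasDerivAt_id x).const_mul b).mul_const c)).sub
    ((((hasDerivAt_const x 1).sub (hasDerivAt_id x)).mul_const m).mul_const r)).congr_deriv <| by
      push_cast; ring

theorem stmt6_general (lam mu xi α s q : ℝ) (hlam : 0 < lam) (hxi : 0 ≤ xi)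
    (hs : 0 < s) (i : ℕ)
    (a₁ a₂ : ℂ)
    (hsum : a₁ + a₂ = (((s ^ α + lam + mu + xi) / lam : ℝ) : ℂ))
    (hprod : a₁ * a₂ = ((mu / lam : ℝ) : ℂ)) :
    HasDerivAt
      (fun z : ℂ =>
        (z ^ (i + 1) * ((s ^ (α - 1) : ℝ) : ℂ) + (xi : ℂ) * z * (s : ℂ)⁻¹
            - (1 - z) * (mu : ℂ) * (q : ℂ))
          / (-(lam : ℂ) * (z - a₁) * (z - a₂)))
      ((((i : ℂ)) * ((s ^ (α - 1) : ℝ) : ℂ) + (mu : ℂ) * (q : ℂ)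
          + (s : ℂ)⁻¹ * (((lam - mu : ℝ)) : ℂ))
        / ((xi : ℂ) + ((s ^ α : ℝ) : ℂ)))
      1 := by
  have hlam' : (lam : ℂ) ≠ 0 := by exact_mod_cast hlam.ne'
  have hs' : (s : ℂ) ≠ 0 := by exact_mod_cast hs.ne'
  have hE : 0 < s ^ α + xi := by positivity
  have hpow : s ^ α = s ^ (α - 1) * s := by rw [← rpow_add_one hs.ne', sub_add_cancel]
  rw [hpow] at hsum hE ⊢
  generalize s ^ (α - 1) = A at hsum hE ⊢
  push_cast at hsum hprod ⊢
  have hE' : (A : ℂ) * s + xi ≠ 0 := by exact_mod_cast hE.ne'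
  have hD1 := neg_mul_one_sub_mul_one_sub_of_vieta hlam' hsum hprod
  have hD := hasDerivAt_neg_mul_sub_mul_sub_one_of_vieta hlam' hsum
  have hN := hasDerivAt_pow_succ_mul_add_mul_mul_sub_one_sub_mul_mul i (A : ℂ) xi (s : ℂ)⁻¹
    mu q 1
  refine (hN.div_of_eq_mul hD (k := (s : ℂ)⁻¹) ?_ ?_).congr_deriv ?_
  · rw [hD1]; convert hE' using 1; ring
  · rw [hD1]; field_simp; ring
  · rw [hD1]; field_simp; ring

theorem stmt6 (lam mu xi α s q : ℝ) (hlam : 0 < lam) (hmu : 0 < mu) (hxi : 0 ≤ xi)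
    (hα : α ∈ Set.Ioo (0:ℝ) 1) (hs : 0 < s) (i : ℕ)
    (a₁ a₂ : ℂ)
    (hsum : a₁ + a₂ = (((s ^ α + lam + mu + xi) / lam : ℝ) : ℂ))
    (hprod : a₁ * a₂ = ((mu / lam : ℝ) : ℂ)) :
    HasDerivAt
      (fun z : ℂ =>
        (z ^ (i + 1) * ((s ^ (α - 1) : ℝ) : ℂ) + (xi : ℂ) * z * (s : ℂ)⁻¹
            - (1 - z) * (mu : ℂ) * (q : ℂ))
          / (-(lam : ℂ) * (z - a₁) * (z - a₂)))
      ((((i : ℂ)) * ((s ^ (α - 1) : ℝ) : ℂ) + (mu : ℂ) * (q : ℂ)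
          + (s : ℂ)⁻¹ * (((lam - mu : ℝ)) : ℂ))
        / ((xi : ℂ) + ((s ^ α : ℝ) : ℂ)))
      1 :=
  stmt6_general lam mu xi α s q hlam hxi hs i a₁ a₂ hsum hprod
end

section
/- For all real β>0, γ>0, δ>0, every real s>0 and every w∈ℝ with |w| < s^β, the Laplace transform of t ↦ t^{γ−1} E^δ_{β,γ}(w t^β) satisfies ∫_0^∞ e^{−st} t^{γ−1} E^δ_{β,γ}(w t^β) dt = s^{βδ−γ}/(s^β − w)^δ. -/
/-!
Expanding the Mittag-Leffler function, the integrand is a series of terms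
`c_r t^(βr+γ-1) e^(-st)`, whose Laplace transforms are `c_r Γ(βr+γ) / s^(βr+γ)`. The same
computation with `|w|` in place of `w` gives a convergent series of the integrals of the absolute
values, so the integral and the sum can be swapped. The factor `Γ(βr+γ)` cancels, and what is left
is `s^(-γ)` times the binomial series `∑ Γ(δ+r)/(r! Γ(δ)) x^r = (1 - x)^(-δ)` at `x = w / s^β`.
-/

open MeasureTheory Real

/-- Three-parameter Mittag-Leffler function
`E^δ_{β,γ}(w) = ∑ w^r Γ(δ+r) / (r! Γ(βr+γ) Γ(δ))`. -/
noncomputable def mittagLeffler3 (β γ δ w : ℝ) : ℝ :=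
  ∑' r : ℕ, w ^ r * Real.Gamma (δ + r) / (r.factorial * Real.Gamma (β * r + γ) * Real.Gamma δ)

open scoped Nat

namespace Real

theorem Gamma_add_nat_eq_ascPochhammer_mul {δ : ℝ} (hδ : ∀ m : ℕ, δ ≠ -m) (n : ℕ) :
    Gamma (δ + n) = (ascPochhammer ℝ n).eval δ * Gamma δ := by
  induction n with
  | zero => simp
  | succ n ih =>
    have hne : δ + n ≠ 0 := fun h => hδ n (by linarith)
    rw [Nat.cast_succ, ← add_assoc, Gamma_add_one hne, ih, ascPochhammer_succ_eval]
    ring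

theorem choose_add_nat_sub_one_eq_Gamma_div {δ : ℝ} (hδ : ∀ m : ℕ, δ ≠ -m) (n : ℕ) :
    Ring.choose (δ + n - 1) n = Gamma (δ + n) / (n ! * Gamma δ) := by
  have hfac : n ! • Ring.multichoose δ n = (ascPochhammer ℝ n).eval δ := by
    rw [Ring.factorial_nsmul_multichoose_eq_ascPochhammer,
      Polynomial.ascPochhammer_smeval_eq_eval]
  rw [← Ring.multichoose_eq, Gamma_add_nat_eq_ascPochhammer_mul hδ, ← hfac, nsmul_eq_mul]
  field_simp [Gamma_ne_zero hδ, Nat.factorial_ne_zero]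

theorem hasSum_Gamma_div_mul_pow {δ x : ℝ} (hδ : ∀ m : ℕ, δ ≠ -m) (hx : |x| < 1) :
    HasSum (fun n : ℕ => Gamma (δ + n) / (n ! * Gamma δ) * x ^ n) ((1 - x) ^ (-δ)) := by
  have hx' : x ∈ Metric.eball (0 : ℝ) 1 := by
    rw [mem_eball_zero_iff, ← ofReal_norm, ENNReal.ofReal_lt_one]
    simpa using hx
  have := (one_div_one_sub_rpow_hasFPowerSeriesOnBall_zero δ).hasSum hx'
  simp only [FormalMultilinearSeries.ofScalars_apply_eq, zero_add, smul_eq_mul,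
    choose_add_nat_sub_one_eq_Gamma_div hδ] at this
  rwa [rpow_neg (by linarith [le_abs_self x]), ← one_div]

end Real

theorem integrableOn_rpow_sub_one_mul_exp_neg_mul {a s : ℝ} (ha : 0 < a) (hs : 0 < s) :
    IntegrableOn (fun t => t ^ (a - 1) * exp (-(s * t))) (Set.Ioi 0) :=
  .of_integral_ne_zero (by rw [integral_rpow_mul_exp_neg_mul_Ioi ha hs]; positivity)

theorem integral_tsum_mul_rpow_sub_one_mul_exp_neg_mul {s : ℝ} (hs : 0 < s) {a c : ℕ → ℝ}
    (ha : ∀ r, 0 < a r) (hc : Summable fun r => |c r| * ((1 / s) ^ a r * Gamma (a r))) :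
    ∫ t in Set.Ioi 0, ∑' r, c r * (t ^ (a r - 1) * exp (-(s * t)))
      = ∑' r, c r * ((1 / s) ^ a r * Gamma (a r)) := by
  have hnorm : ∀ r, ∫ t in Set.Ioi 0, ‖c r * (t ^ (a r - 1) * exp (-(s * t)))‖
      = |c r| * ((1 / s) ^ a r * Gamma (a r)) := fun r => by
    rw [← integral_rpow_mul_exp_neg_mul_Ioi (ha r) hs, ← integral_const_mul]
    refine setIntegral_congr_fun measurableSet_Ioi fun t (ht : 0 < t) => ?_
    rw [norm_mul, norm_eq_abs, norm_of_nonneg (by positivity)]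
  rw [← integral_tsum_of_summable_integral_norm
    (fun r => (integrableOn_rpow_sub_one_mul_exp_neg_mul (ha r) hs).const_mul (c r))
    (by simpa only [hnorm] using hc)]
  simp only [integral_const_mul, integral_rpow_mul_exp_neg_mul_Ioi (ha _) hs]

theorem exp_neg_mul_mul_rpow_mul_mittagLeffler3 {β γ δ s w t : ℝ} (ht : 0 < t) :
    exp (-s * t) * (t ^ (γ - 1) * mittagLeffler3 β γ δ (w * t ^ β))
      = ∑' r : ℕ, w ^ r * Gamma (δ + r) / (r ! * Gamma (β * r + γ) * Gamma δ)
          * (t ^ (β * r + γ - 1) * exp (-(s * t))) := by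
  rw [mittagLeffler3, ← mul_assoc, ← tsum_mul_left]
  refine tsum_congr fun r => ?_
  rw [mul_pow, ← rpow_natCast (t ^ β), ← rpow_mul ht.le, rpow_sub_one ht.ne',
    rpow_sub_one ht.ne', rpow_add ht, neg_mul]
  ring

theorem abs_mittagLeffler3_summand {β γ δ w : ℝ} (hδ : 0 < δ) (r : ℕ)
    (hΓ : 0 < Gamma (β * r + γ)) :
    |w ^ r * Gamma (δ + r) / (r ! * Gamma (β * r + γ) * Gamma δ)|
      = |w| ^ r * Gamma (δ + r) / (r ! * Gamma (β * r + γ) * Gamma δ) := by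
  have hnum : 0 < Gamma (δ + r) := Gamma_pos_of_pos (by positivity)
  have hden : 0 < r ! * Gamma (β * r + γ) * Gamma δ := by
    have := Gamma_pos_of_pos hδ
    positivity
  rw [abs_div, abs_mul, abs_pow, abs_of_pos hnum, abs_of_pos hden]

theorem hasSum_mittagLeffler3_summand_mul_rpow_mul_Gamma {β γ δ s w : ℝ}
    (hΓ : ∀ r : ℕ, Gamma (β * r + γ) ≠ 0) (hδ : ∀ m : ℕ, δ ≠ -m) (hs : 0 < s)
    (hw : |w * (1 / s) ^ β| < 1) :
    HasSum (fun r : ℕ => w ^ r * Gamma (δ + r) / (r ! * Gamma (β * r + γ) * Gamma δ)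
        * ((1 / s) ^ (β * r + γ) * Gamma (β * r + γ)))
      ((1 / s) ^ γ * (1 - w * (1 / s) ^ β) ^ (-δ)) := by
  refine ((hasSum_Gamma_div_mul_pow hδ hw).mul_left ((1 / s) ^ γ)).congr_fun fun r => ?_
  rw [rpow_add (by positivity), mul_pow, ← rpow_natCast ((1 / s) ^ β),
    ← rpow_mul (by positivity)]
  have hg := hΓ r
  generalize Gamma (β * r + γ) = g at hg ⊢
  field_simp

theorem rpow_mul_one_sub_mul_rpow_neg {β γ δ s w : ℝ} (hs : 0 < s) (hw : w < s ^ β) :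
    (1 / s) ^ γ * (1 - w * (1 / s) ^ β) ^ (-δ) = s ^ (β * δ - γ) / (s ^ β - w) ^ δ := by
  have hsβ : 0 < s ^ β := by positivity
  have h1 : 1 - w * (1 / s) ^ β = (s ^ β - w) / s ^ β := by
    rw [div_rpow zero_le_one hs.le, one_rpow]
    field_simp
  rw [h1, div_rpow (by linarith) hsβ.le, rpow_neg (by linarith), rpow_neg hsβ.le,
    ← rpow_mul hs.le, rpow_sub hs, div_rpow zero_le_one hs.le, one_rpow]
  field_simp

theorem stmt19 (β γ δ s w : ℝ) (hβ : 0 < β) (hγ : 0 < γ) (hδ : 0 < δ)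
    (hs : 0 < s) (hw : |w| < s ^ β) :
    (∫ t in Set.Ioi (0:ℝ), Real.exp (-s * t) * (t ^ (γ - 1) * mittagLeffler3 β γ δ (w * t ^ β)))
      = s ^ (β * δ - γ) / (s ^ β - w) ^ δ := by
  have ha : ∀ r : ℕ, 0 < β * r + γ := fun r => by positivity
  have hΓ : ∀ r : ℕ, 0 < Gamma (β * r + γ) := fun r => Gamma_pos_of_pos (ha r)
  have hδ' : ∀ m : ℕ, δ ≠ -m := fun m => by linarith [m.cast_nonneg (α := ℝ)]
  have hx : |w * (1 / s) ^ β| < 1 := by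
    rw [div_rpow zero_le_one hs.le, one_rpow, abs_mul, abs_of_pos (by positivity : 0 < 1 / s ^ β),
      mul_one_div, div_lt_one (by positivity)]
    exact hw
  have hx_abs : |(|w| * (1 / s) ^ β)| < 1 := by rwa [abs_mul, abs_abs, ← abs_mul]
  have hsum := (hasSum_mittagLeffler3_summand_mul_rpow_mul_Gamma (fun r => (hΓ r).ne') hδ' hs
    hx_abs).summable
  simp only [← abs_mittagLeffler3_summand hδ _ (hΓ _)] at hsum
  rw [setIntegral_congr_fun measurableSet_Ioi fun t ht =>
      exp_neg_mul_mul_rpow_mul_mittagLeffler3 ht,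
    integral_tsum_mul_rpow_sub_one_mul_exp_neg_mul hs ha hsum,
    (hasSum_mittagLeffler3_summand_mul_rpow_mul_Gamma (fun r => (hΓ r).ne') hδ' hs hx).tsum_eq,
    rpow_mul_one_sub_mul_rpow_neg hs (lt_of_le_of_lt (le_abs_self w) hw)]
end
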